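/- arXiv:2406.04196 — 3 statements merged into one kernel-verified Lean document; each statement's English description precedes it below -/
import Mathlib

section
/- Let G be a group and let P, L, U, K be subgroups of G such that U is normal in P, P = LU, L ∩ U = {1}, G = PK, and K ∩ P = (K ∩ L)(K ∩ U). Let (σ, V) be a representation of L and let σ̃ : P → GL(V) be its inflation to P, i.e. σ̃(ℓu) = σ(ℓ) for ℓ ∈ L, u ∈ U (this is a well-defined group homomorphism). Then the restriction map f ↦ f|_K is a K-equivariant linear isomorphism from Ind_P^G V = {f : G → V : f(pg) = σ̃(p)f(g) for all p ∈ P, g ∈ G} (with G acting by right translation (g·f)(x) = f(xg)) onto Ind_{K∩P}^K V = {f : K → V : f(qk) = σ̃(q)f(k) for all q ∈ K ∩ P, k ∈ K} (with K acting by right translation). -/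
/-- The induced representation `Ind_P^G V`: the space of functions `f : G → V` such that
`f (p * g) = σ p (f g)` for all `p ∈ P`, `g ∈ G`, as a `ℂ`-submodule of `G → V`.
Here `σ : G → (Module.End ℂ V)ˣ` is only used through its values on `P`. -/
def IndG {G : Type*} [Group G] {V : Type*} [AddCommGroup V] [Module ℂ V]
    (P : Subgroup G) (σ : G → (Module.End ℂ V)ˣ) : Submodule ℂ (G → V) where
  carrier := {f | ∀ p ∈ P, ∀ g : G, f (p * g) = (σ p : Module.End ℂ V) (f g)}
  add_mem' := by
    intro a b ha hb p hp g
    simp only [Pi.add_apply, ha p hp g, hb p hp g, map_add]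
  zero_mem' := by
    intro p hp g
    simp
  smul_mem' := by
    intro c a ha p hp g
    simp only [Pi.smul_apply, ha p hp g, map_smul]

/-- The induced representation `Ind_{K ∩ P}^K V`: the space of functions `f : K → V` such that
`f (q * k) = σ q (f k)` for all `q ∈ K ∩ P`, `k ∈ K`, as a `ℂ`-submodule of `K → V`. -/
def IndK {G : Type*} [Group G] {V : Type*} [AddCommGroup V] [Module ℂ V]
    (K P : Subgroup G) (σ : G → (Module.End ℂ V)ˣ) : Submodule ℂ (↥K → V) where
  carrier := {f | ∀ q k : ↥K, (q : G) ∈ P → f (q * k) = (σ (q : G) : Module.End ℂ V) (f k)}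
  add_mem' := by
    intro a b ha hb q k hq
    simp only [Pi.add_apply, ha q k hq, hb q k hq, map_add]
  zero_mem' := by
    intro q k hq
    simp
  smul_mem' := by
    intro c a ha q k hq
    simp only [Pi.smul_apply, ha q k hq, map_smul]


/-!
Since `G = PK`, a function in `Ind_P^G V` is determined by its restriction to `K`, via
`f (p * k) = σ p (f k)`. Conversely a function `f` in `Ind_{K∩P}^K V` extends to `G` by the same
formula: two decompositions `p * k = p' * k'` differ by `p'⁻¹ * p = k' * k⁻¹ ∈ K ∩ P`, on which `f`
already transforms by `σ`, so the extension is well defined, and it is `P`-equivariant because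
`σ` is multiplicative on `P`.
-/

section

variable {G : Type*} [Group G] {V : Type*} [AddCommGroup V] [Module ℂ V]
  {P K : Subgroup G} {σ : G → (Module.End ℂ V)ˣ}

namespace IndK

theorem apply_eq_of_mul_eq (f : IndK K P σ) {p : G} (hp : p ∈ P) {k k' : K}
    (h : p * k = k') : (f : K → V) k' = (σ p : Module.End ℂ V) ((f : K → V) k) := by
  have hpK : p ∈ K := by
    rw [eq_mul_inv_of_mul_eq h]
    exact mul_mem k'.2 (inv_mem k.2)
  have hk' : (⟨p, hpK⟩ * k : K) = k' := Subtype.ext h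
  rw [← hk']
  exact f.2 ⟨p, hpK⟩ k hp

theorem rep_apply_eq_of_mul_eq_mul (hσmul : ∀ p ∈ P, ∀ q ∈ P, σ (p * q) = σ p * σ q)
    (f : IndK K P σ) {p p' : G} (hp : p ∈ P) (hp' : p' ∈ P) {k k' : K}
    (h : p * k = p' * k') :
    (σ p : Module.End ℂ V) ((f : K → V) k) = (σ p' : Module.End ℂ V) ((f : K → V) k') := by
  have hq : p'⁻¹ * p ∈ P := mul_mem (inv_mem hp') hp
  have hfk' := apply_eq_of_mul_eq f hq (k := k) (k' := k')
    (by rw [mul_assoc, h, inv_mul_cancel_left])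
  rw [hfk', ← Module.End.mul_apply, ← Units.val_mul, ← hσmul p' hp' _ hq, mul_inv_cancel_left]

variable (hPK : ∀ g : G, ∃ p ∈ P, ∃ k ∈ K, g = p * k)
include hPK

/-- `g ↦ σ p (f k)` for a chosen decomposition `g = p * k`. -/
noncomputable def extendFun (f : IndK K P σ) (g : G) : V :=
  (σ (hPK g).choose : Module.End ℂ V)
    ((f : K → V) ⟨(hPK g).choose_spec.2.choose, (hPK g).choose_spec.2.choose_spec.1⟩)

theorem extendFun_mul (hσmul : ∀ p ∈ P, ∀ q ∈ P, σ (p * q) = σ p * σ q)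
    (f : IndK K P σ) {p : G} (hp : p ∈ P) (k : K) :
    extendFun hPK f (p * k) = (σ p : Module.End ℂ V) ((f : K → V) k) :=
  rep_apply_eq_of_mul_eq_mul hσmul f (hPK _).choose_spec.1 hp
    (hPK _).choose_spec.2.choose_spec.2.symm

theorem extendFun_mem (hσmul : ∀ p ∈ P, ∀ q ∈ P, σ (p * q) = σ p * σ q)
    (f : IndK K P σ) : extendFun hPK f ∈ IndG P σ := by
  intro p hp g
  obtain ⟨p₀, hp₀, k₀, hk₀, rfl⟩ := hPK g
  rw [← mul_assoc, extendFun_mul hPK hσmul f (mul_mem hp hp₀) ⟨k₀, hk₀⟩,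
    extendFun_mul hPK hσmul f hp₀ ⟨k₀, hk₀⟩, hσmul p hp p₀ hp₀, Units.val_mul,
    Module.End.mul_apply]

theorem extendFun_coe (f : IndK K P σ) (x : K) : extendFun hPK f x = (f : K → V) x :=
  (apply_eq_of_mul_eq f (hPK x).choose_spec.1 (hPK x).choose_spec.2.choose_spec.2.symm).symm

end IndK

namespace IndG

def restrict (K : Subgroup G) : IndG P σ →ₗ[ℂ] IndK K P σ where
  toFun f := ⟨fun x => (f : G → V) x, fun q k hq => f.2 q hq k⟩
  map_add' _ _ := rfl
  map_smul' _ _ := rfl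

variable (hPK : ∀ g : G, ∃ p ∈ P, ∃ k ∈ K, g = p * k)
include hPK

theorem restrict_injective :
    Function.Injective (restrict K : IndG P σ →ₗ[ℂ] IndK K P σ) := by
  intro f₁ f₂ h
  ext g
  obtain ⟨p, hp, k, hk, rfl⟩ := hPK g
  have hfk : (f₁ : G → V) k = (f₂ : G → V) k := congrFun (congrArg Subtype.val h) ⟨k, hk⟩
  rw [f₁.2 p hp k, f₂.2 p hp k, hfk]

theorem restrict_surjective (hσmul : ∀ p ∈ P, ∀ q ∈ P, σ (p * q) = σ p * σ q) :
    Function.Surjective (restrict K : IndG P σ →ₗ[ℂ] IndK K P σ) := fun f =>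
  ⟨⟨IndK.extendFun hPK f, IndK.extendFun_mem hPK hσmul f⟩,
    Subtype.ext (funext (IndK.extendFun_coe hPK f))⟩

end IndG

end

theorem statement0_general {G : Type*} [Group G] {V : Type*} [AddCommGroup V] [Module ℂ V]
    (P K : Subgroup G)
    (hIwasawa : ∀ g : G, ∃ p ∈ P, ∃ k ∈ K, g = p * k)
    (σ : G → (Module.End ℂ V)ˣ)
    (hσmul : ∀ p ∈ P, ∀ q ∈ P, σ (p * q) = σ p * σ q) :
    ∃ e : IndG P σ ≃ₗ[ℂ] IndK K P σ,
      -- `e` is the restriction map `f ↦ f|_K`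
      (∀ (f : IndG P σ) (x : ↥K), (e f : ↥K → V) x = (f : G → V) x) ∧
      -- `e` is `K`-equivariant for the right-translation actions
      (∀ (f f' : IndG P σ) (k : ↥K),
        ((f' : G → V) = fun g => (f : G → V) (g * (k : G))) →
        ∀ x : ↥K, (e f' : ↥K → V) x = (e f : ↥K → V) (x * k)) :=
  ⟨LinearEquiv.ofBijective (IndG.restrict K)
      ⟨IndG.restrict_injective hIwasawa, IndG.restrict_surjective hIwasawa hσmul⟩,
    fun _ _ => rfl, fun _ _ _ hf x => congrFun hf x⟩

/-- under the hypotheses `U ⊴ P`, `P = LU`, `L ∩ U = 1`, `G = PK`,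
`K ∩ P = (K ∩ L)(K ∩ U)`, with `σ` a representation of `L` inflated to `P`
(multiplicative on `P`, `σ (l * u) = σ l`), the restriction map `f ↦ f|_K` is a
`K`-equivariant linear isomorphism `Ind_P^G V ≃ Ind_{K∩P}^K V`
(both with the right-translation action). -/
theorem statement0 {G : Type*} [Group G] {V : Type*} [AddCommGroup V] [Module ℂ V]
    (P L U K : Subgroup G)
    (hUP : U ≤ P) (hLP : L ≤ P)
    (hUnormal : ∀ p ∈ P, ∀ u ∈ U, p * u * p⁻¹ ∈ U)
    (hPLU : ∀ p ∈ P, ∃ l ∈ L, ∃ u ∈ U, p = l * u)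
    (hLU : ∀ x : G, x ∈ L → x ∈ U → x = 1)
    (hIwasawa : ∀ g : G, ∃ p ∈ P, ∃ k ∈ K, g = p * k)
    (hKP : ∀ q : G, q ∈ K → q ∈ P →
      ∃ l, l ∈ K ∧ l ∈ L ∧ ∃ u, u ∈ K ∧ u ∈ U ∧ q = l * u)
    (σ : G → (Module.End ℂ V)ˣ)
    (hσone : σ 1 = 1)
    (hσmul : ∀ p ∈ P, ∀ q ∈ P, σ (p * q) = σ p * σ q)
    (hσinfl : ∀ l ∈ L, ∀ u ∈ U, σ (l * u) = σ l) :
    ∃ e : IndG P σ ≃ₗ[ℂ] IndK K P σ,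
      -- `e` is the restriction map `f ↦ f|_K`
      (∀ (f : IndG P σ) (x : ↥K), (e f : ↥K → V) x = (f : G → V) x) ∧
      -- `e` is `K`-equivariant for the right-translation actions
      (∀ (f f' : IndG P σ) (k : ↥K),
        ((f' : G → V) = fun g => (f : G → V) (g * (k : G))) →
        ∀ x : ↥K, (e f' : ↥K → V) x = (e f : ↥K → V) (x * k)) :=
  statement0_general P K hIwasawa σ hσmul
end

section
/- Let K be a group, N a normal subgroup of K, H a subgroup of K, and (τ, V) a representation of H. Consider Ind_H^K V = {f : K → V : f(hx) = τ(h)f(x) for all h ∈ H, x ∈ K} with K acting by right translation (k·f)(x) = f(xk). Then: (i) the subspace (Ind_H^K V)^N of f satisfying f(xn) = f(x) for all x ∈ K, n ∈ N is stable under the K-action, and N acts trivially on it, so it is a representation of K/N; (ii) every f ∈ (Ind_H^K V)^N takes values in the fixed-vector space V^{H∩N} = {v ∈ V : τ(h)v = v for all h ∈ H ∩ N}; (iii) V^{H∩N} is stable under τ(h) for every h ∈ H, and setting τ̄(hN) := τ(h)|_{V^{H∩N}} gives a well-defined representation of the subgroup HN/N of K/N on V^{H∩N}; (iv) the map f ↦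 f̄, where f̄(xN) := f(x), is a well-defined K/N-equivariant linear isomorphism from (Ind_H^K V)^N onto Ind_{HN/N}^{K/N} V^{H∩N}. -/
/-- The subspace `(Ind_H^K V)^N` of the induced representation `Ind_H^K V`:
functions `f : K → V` with `f (h * x) = τ h (f x)` for `h ∈ H` and
`f (x * n) = f x` for `n ∈ N`, as a `ℂ`-submodule of `K → V`. -/
def InvInd {K : Type*} [Group K] {V : Type*} [AddCommGroup V] [Module ℂ V]
    (N H : Subgroup K) (τ : K → (Module.End ℂ V)ˣ) : Submodule ℂ (K → V) where
  carrier := {f | (∀ h ∈ H, ∀ x : K, f (h * x) = (τ h : Module.End ℂ V) (f x)) ∧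
    (∀ x : K, ∀ n ∈ N, f (x * n) = f x)}
  add_mem' := by
    intro a b ha hb
    refine ⟨?_, ?_⟩
    · intro h hh x
      simp only [Pi.add_apply, ha.1 h hh x, hb.1 h hh x, map_add]
    · intro x n hn
      simp only [Pi.add_apply, ha.2 x n hn, hb.2 x n hn]
  zero_mem' := by
    exact ⟨fun h hh x => by simp, fun x n hn => rfl⟩
  smul_mem' := by
    intro c a ha
    refine ⟨?_, ?_⟩
    · intro h hh x
      simp only [Pi.smul_apply, ha.1 h hh x, map_smul]
    · intro x n hn
      simp only [Pi.smul_apply, ha.2 x n hn]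

/-- The fixed-vector subspace `V^{H ∩ N} = {v : τ h v = v for all h ∈ H ∩ N}`. -/
def FixSub {K : Type*} [Group K] {V : Type*} [AddCommGroup V] [Module ℂ V]
    (N H : Subgroup K) (τ : K → (Module.End ℂ V)ˣ) : Submodule ℂ V where
  carrier := {v | ∀ h : K, h ∈ H → h ∈ N → (τ h : Module.End ℂ V) v = v}
  add_mem' := by
    intro a b ha hb h hH hN
    simp only [map_add, ha h hH hN, hb h hH hN]
  zero_mem' := by intro h hH hN; simp
  smul_mem' := by
    intro c a ha h hH hN
    simp only [map_smul, ha h hH hN]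

/-- The induced representation `Ind_{HN/N}^{K/N} V^{H∩N}`: functions
`F : K ⧸ N → V` taking values in `V^{H∩N}` with `F (h̄ * y) = τ h (F y)` for `h ∈ H`. -/
def QInd {K : Type*} [Group K] {V : Type*} [AddCommGroup V] [Module ℂ V]
    (N H : Subgroup K) [N.Normal] (τ : K → (Module.End ℂ V)ˣ) :
    Submodule ℂ (K ⧸ N → V) where
  carrier := {F | (∀ y : K ⧸ N, F y ∈ FixSub N H τ) ∧
    (∀ h ∈ H, ∀ y : K ⧸ N, F ((QuotientGroup.mk h : K ⧸ N) * y) = (τ h : Module.End ℂ V) (F y))}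
  add_mem' := by
    intro a b ha hb
    refine ⟨fun y => Submodule.add_mem _ (ha.1 y) (hb.1 y), ?_⟩
    intro h hh y
    simp only [Pi.add_apply, ha.2 h hh y, hb.2 h hh y, map_add]
  zero_mem' := by
    exact ⟨fun y => Submodule.zero_mem _, fun h hh y => by simp⟩
  smul_mem' := by
    intro c a ha
    refine ⟨fun y => Submodule.smul_mem _ _ (ha.1 y), ?_⟩
    intro h hh y
    simp only [Pi.smul_apply, ha.2 h hh y, map_smul]

/-- for `N ⊴ K`, `H ≤ K` and a representation `τ` of `H` on `V`:
(i) `(Ind_H^K V)^N` is stable under right translation by `K` and `N` acts trivially on it;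
(ii) every `f ∈ (Ind_H^K V)^N` takes values in `V^{H∩N}`;
(iii) `V^{H∩N}` is `τ(H)`-stable and `h N ↦ τ(h)|_{V^{H∩N}}` is well defined on `HN/N`;
(iv) `f ↦ f̄` (with `f̄(xN) = f(x)`) is a `K/N`-equivariant linear isomorphism
`(Ind_H^K V)^N ≃ Ind_{HN/N}^{K/N} V^{H∩N}`. -/
theorem statement1 {K : Type*} [Group K] {V : Type*} [AddCommGroup V] [Module ℂ V]
    (N H : Subgroup K) [N.Normal]
    (τ : K → (Module.End ℂ V)ˣ)
    (hτone : τ 1 = 1)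
    (hτmul : ∀ h ∈ H, ∀ h' ∈ H, τ (h * h') = τ h * τ h') :
    -- (i) stability under the right-translation action of `K`, and `N` acts trivially
    (∀ f ∈ InvInd N H τ, ∀ k : K, (fun x => f (x * k)) ∈ InvInd N H τ) ∧
    (∀ f ∈ InvInd N H τ, ∀ n ∈ N, (fun x => f (x * n)) = f) ∧
    -- (ii) values lie in `V^{H∩N}`
    (∀ f ∈ InvInd N H τ, ∀ x : K, f x ∈ FixSub N H τ) ∧
    -- (iii) `V^{H∩N}` is `τ(H)`-stable and `τ̄` is well defined on `HN/N`
    (∀ h ∈ H, ∀ v ∈ FixSub N H τ, (τ h : Module.End ℂ V) v ∈ FixSub N H τ) ∧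
    (∀ h ∈ H, ∀ h' ∈ H, h⁻¹ * h' ∈ N →
      ∀ v ∈ FixSub N H τ, (τ h : Module.End ℂ V) v = (τ h' : Module.End ℂ V) v) ∧
    -- (iv) the `K/N`-equivariant linear isomorphism `f ↦ f̄`
    (∃ e : InvInd N H τ ≃ₗ[ℂ] QInd N H τ,
      (∀ (f : InvInd N H τ) (x : K),
        (e f : K ⧸ N → V) (QuotientGroup.mk x) = (f : K → V) x) ∧
      (∀ (f f' : InvInd N H τ) (k : K),
        ((f' : K → V) = fun x => (f : K → V) (x * k)) →
        ∀ y : K ⧸ N, (e f' : K ⧸ N → V) y = (e f : K ⧸ N → V) (y * QuotientGroup.mk k))) := by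
  
  classical
  -- basic unfolding lemmas
  have hNnorm : N.Normal := inferInstance
  -- (i) translation stability
  have part1 : ∀ f ∈ InvInd N H τ, ∀ k : K, (fun x => f (x * k)) ∈ InvInd N H τ := by
    intro f hf k
    refine ⟨fun h hh x => by simpa [mul_assoc] using hf.1 h hh (x * k), ?_⟩
    intro x n hn
    have hn' : k⁻¹ * n * k ∈ N := by
      simpa using hNnorm.conj_mem n hn k⁻¹
    show f (x * n * k) = f (x * k)
    have : x * n * k = (x * k) * (k⁻¹ * n * k) := by group
    rw [this, hf.2 (x * k) _ hn']
  have part2 : ∀ f ∈ InvInd N H τ, ∀ n ∈ N, (fun x => f (x * n)) = f := by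
    intro f hf n hn
    funext x
    exact hf.2 x n hn
  have part3 : ∀ f ∈ InvInd N H τ, ∀ x : K, f x ∈ FixSub N H τ := by
    intro f hf x h hH hN
    have h1 : f (h * x) = (τ h : Module.End ℂ V) (f x) := hf.1 h hH x
    have h2 : x⁻¹ * h * x ∈ N := by simpa using hNnorm.conj_mem h hN x⁻¹
    have h3 : h * x = x * (x⁻¹ * h * x) := by group
    rw [h3, hf.2 x _ h2] at h1
    exact h1.symm
  have part4 : ∀ h ∈ H, ∀ v ∈ FixSub N H τ,
      (τ h : Module.End ℂ V) v ∈ FixSub N H τ := by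
    intro h hH v hv h' hH' hN'
    have hc : h⁻¹ * h' * h ∈ H := H.mul_mem (H.mul_mem (H.inv_mem hH) hH') hH
    have hcN : h⁻¹ * h' * h ∈ N := by simpa using hNnorm.conj_mem h' hN' h⁻¹
    have key : h' * h = h * (h⁻¹ * h' * h) := by group
    have e1 : τ (h' * h) = τ h' * τ h := hτmul h' hH' h hH
    have e2 : τ (h' * h) = τ h * τ (h⁻¹ * h' * h) := by
      rw [key]; exact hτmul h hH _ hc
    calc (τ h' : Module.End ℂ V) ((τ h : Module.End ℂ V) v)
        = (↑(τ h' * τ h) : Module.End ℂ V) v := rfl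
      _ = (↑(τ h * τ (h⁻¹ * h' * h)) : Module.End ℂ V) v := by rw [← e1, e2]
      _ = (τ h : Module.End ℂ V) ((τ (h⁻¹ * h' * h) : Module.End ℂ V) v) := rfl
      _ = (τ h : Module.End ℂ V) v := by rw [hv _ hc hcN]
  have part5 : ∀ h ∈ H, ∀ h' ∈ H, h⁻¹ * h' ∈ N →
      ∀ v ∈ FixSub N H τ, (τ h : Module.End ℂ V) v = (τ h' : Module.End ℂ V) v := by
    intro h hH h' hH' hN v hv
    have hm : h⁻¹ * h' ∈ H := H.mul_mem (H.inv_mem hH) hH'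
    have e1 : τ h' = τ h * τ (h⁻¹ * h') := by
      have e0 := hτmul h hH _ hm
      rw [mul_inv_cancel_left] at e0
      exact e0
    rw [e1]
    show (τ h : Module.End ℂ V) v = (τ h : Module.End ℂ V) ((τ (h⁻¹ * h') : Module.End ℂ V) v)
    rw [hv _ hm hN]
  refine ⟨part1, part2, part3, part4, part5, ?_⟩
  -- (iv)
  have lift_wd : ∀ (f : InvInd N H τ) (a b : K), (QuotientGroup.leftRel N).r a b → (f : K → V) a = (f : K → V) b := by
    intro f a b hab
    have h : a⁻¹ * b ∈ N := QuotientGroup.leftRel_apply.mp hab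
    have := f.2.2 a _ h
    calc (f : K → V) a = (f : K → V) (a * (a⁻¹ * b)) := (f.2.2 a _ h).symm
      _ = (f : K → V) b := by rw [mul_inv_cancel_left]
  set L : InvInd N H τ → (K ⧸ N → V) :=
    fun f => fun y => Quotient.liftOn' y (f : K → V) (lift_wd f) with hL
  have Lmk : ∀ (f : InvInd N H τ) (x : K), L f (QuotientGroup.mk x) = (f : K → V) x :=
    fun f x => rfl
  have Lmem : ∀ f, L f ∈ QInd N H τ := by
    intro f
    refine ⟨?_, ?_⟩
    · intro y
      induction y using Quotient.inductionOn' with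
      | h x => exact part3 f f.2 x
    · intro h hh y
      induction y using Quotient.inductionOn' with
      | h x =>
        have : (QuotientGroup.mk h : K ⧸ N) * (QuotientGroup.mk x) = QuotientGroup.mk (h * x) :=
          rfl
        rw [this, Lmk, Lmk]
        exact f.2.1 h hh x
  have Mmem : ∀ F : QInd N H τ, (fun x => (F : K ⧸ N → V) (QuotientGroup.mk x)) ∈ InvInd N H τ := by
    intro F
    refine ⟨?_, ?_⟩
    · intro h hh x
      exact F.2.2 h hh (QuotientGroup.mk x)
    · intro x n hn
      show (F : K ⧸ N → V) (QuotientGroup.mk (x * n)) = (F : K ⧸ N → V) (QuotientGroup.mk x)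
      have hq : (QuotientGroup.mk (x * n) : K ⧸ N) = QuotientGroup.mk x :=
        QuotientGroup.eq.mpr (by simpa [mul_inv_rev, mul_assoc] using N.inv_mem hn)
      rw [hq]
  refine ⟨{ toFun := fun f => ⟨L f, Lmem f⟩
            invFun := fun F => ⟨fun x => (F : K ⧸ N → V) (QuotientGroup.mk x), Mmem F⟩
            map_add' := by
              intro f g
              ext y
              induction y using Quotient.inductionOn' with
              | h x => rfl
            map_smul' := by
              intro c f
              ext y
              induction y using Quotient.inductionOn' with
              | h x => rfl
            left_inv := by intro f; ext x; rfl
            right_inv := by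
              intro F
              ext y
              induction y using Quotient.inductionOn' with
              | h x => rfl }, ?_, ?_⟩
  · intro f x; rfl
  · intro f f' k hff' y
    induction y using Quotient.inductionOn' with
    | h x =>
      show L f' (QuotientGroup.mk x) = L f ((QuotientGroup.mk x) * (QuotientGroup.mk k))
      have : (QuotientGroup.mk x : K ⧸ N) * QuotientGroup.mk k = QuotientGroup.mk (x * k) := rfl
      rw [this, Lmk, Lmk, hff']
end

section
/- Let G be a group and let P, L, U, K be subgroups of G such that U is normal in P, P = LU, L ∩ U = {1}, G = PK, and K ∩ P = (K ∩ L)(K ∩ U); let N be a normal subgroup of K. Let (σ, V) be a representation of L and σ̃ : P → GL(V) its inflation to P (σ̃(ℓu) = σ(ℓ)). Put Q := K ∩ P and W := {v ∈ V : σ̃(q)v = v for all q ∈ Q ∩ N}. Then the space {f ∈ Ind_P^G V : f(xn) = f(x) for all x ∈ G, n ∈ N} is stable under the right-translation action of K, the subgroup N acts trivially on it, and as a representation of K/N it is isomorphic to Ind_{QN/N}^{K/N} W, where QN/N acts on W by qN ↦ σ̃(q)|_W (a well-defined representation). -/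
/-!
Since `G = PK`, a function `f` in `Ind_P^G V` is determined by its restriction to `K`, through
`f (p * k) = σ p (f k)`. The restriction of an `N`-invariant `f` is `K ∩ P`-equivariant and
`N`-invariant, and it takes values in `W`: for `q ∈ K ∩ P ∩ N` and `x ∈ K`, normality of `N` in `K`
gives `σ q (f x) = f (x * (x⁻¹ * q * x)) = f x`. Conversely every such `F : K → V` extends to
`G` by `f (p * k) = σ p (F k)`; this is well defined because `p * k = p' * k'` forces
`p'⁻¹ * p = k' * k⁻¹ ∈ K ∩ P`. Restriction commutes with right translation by `K`.
-/

/-- The subspace of `N`-invariants in `Ind_P^G V`. -/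
def InvIndG {G : Type*} [Group G] {V : Type*} [AddCommGroup V] [Module ℂ V]
    (P N : Subgroup G) (σ : G → (Module.End ℂ V)ˣ) : Submodule ℂ (G → V) where
  carrier := {f | (∀ p ∈ P, ∀ g : G, f (p * g) = (σ p : Module.End ℂ V) (f g)) ∧
    (∀ x : G, ∀ n ∈ N, f (x * n) = f x)}
  add_mem' := by
    intro a b ha hb
    exact ⟨fun p hp g => by simp only [Pi.add_apply, ha.1 p hp g, hb.1 p hp g, map_add],
      fun x n hn => by simp only [Pi.add_apply, ha.2 x n hn, hb.2 x n hn]⟩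
  zero_mem' := ⟨fun p hp g => by simp, fun x n hn => rfl⟩
  smul_mem' := by
    intro c a ha
    exact ⟨fun p hp g => by simp only [Pi.smul_apply, ha.1 p hp g, map_smul],
      fun x n hn => by simp only [Pi.smul_apply, ha.2 x n hn]⟩

/-- The subspace `W` of vectors fixed by `Q ∩ N`, where `Q = K ∩ P`. -/
def WSub {G : Type*} [Group G] {V : Type*} [AddCommGroup V] [Module ℂ V]
    (K P N : Subgroup G) (σ : G → (Module.End ℂ V)ˣ) : Submodule ℂ V where
  carrier := {v | ∀ q : G, q ∈ K → q ∈ P → q ∈ N → (σ q : Module.End ℂ V) v = v}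
  add_mem' := by
    intro a b ha hb q hK hP hN
    simp only [map_add, ha q hK hP hN, hb q hK hP hN]
  zero_mem' := by intro q hK hP hN; simp
  smul_mem' := by
    intro c a ha q hK hP hN
    simp only [map_smul, ha q hK hP hN]

/-- A concrete model for `Ind_{QN/N}^{K/N} W` (with `Q = K ∩ P`), realized as the space
of functions `F : K → V` taking values in `W` that are `Q`-equivariant on the left and
`N`-invariant on the right; such functions are exactly the pullbacks along `K → K/N`
of elements of `Ind_{QN/N}^{K/N} W`. -/
def QIndK {G : Type*} [Group G] {V : Type*} [AddCommGroup V] [Module ℂ V]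
    (K P N : Subgroup G) (σ : G → (Module.End ℂ V)ˣ) : Submodule ℂ (↥K → V) where
  carrier := {F | (∀ x : ↥K, F x ∈ WSub K P N σ) ∧
    (∀ q x : ↥K, (q : G) ∈ P → F (q * x) = (σ (q : G) : Module.End ℂ V) (F x)) ∧
    (∀ x n : ↥K, (n : G) ∈ N → F (x * n) = F x)}
  add_mem' := by
    intro a b ha hb
    exact ⟨fun x => Submodule.add_mem _ (ha.1 x) (hb.1 x),
      fun q x hq => by simp only [Pi.add_apply, ha.2.1 q x hq, hb.2.1 q x hq, map_add],
      fun x n hn => by simp only [Pi.add_apply, ha.2.2 x n hn, hb.2.2 x n hn]⟩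
  zero_mem' :=
    ⟨fun x => Submodule.zero_mem _, fun q x hq => by simp, fun x n hn => rfl⟩
  smul_mem' := by
    intro c a ha
    exact ⟨fun x => Submodule.smul_mem _ _ (ha.1 x),
      fun q x hq => by simp only [Pi.smul_apply, ha.2.1 q x hq, map_smul],
      fun x n hn => by simp only [Pi.smul_apply, ha.2.2 x n hn]⟩

section

variable {G : Type*} [Group G] {V : Type*} [AddCommGroup V] [Module ℂ V]
  {P K N : Subgroup G} {σ : G → (Module.End ℂ V)ˣ}

theorem inv_mul_mul_mem_of_normalizes (hNnormal : ∀ k ∈ K, ∀ n ∈ N, k * n * k⁻¹ ∈ N)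
    {k n : G} (hk : k ∈ K) (hn : n ∈ N) : k⁻¹ * n * k ∈ N := by
  simpa using hNnormal k⁻¹ (K.inv_mem hk) n hn

theorem map_mul_apply_of_mem (hσmul : ∀ p ∈ P, ∀ q ∈ P, σ (p * q) = σ p * σ q)
    {p q : G} (hp : p ∈ P) (hq : q ∈ P) (v : V) :
    (σ (p * q) : Module.End ℂ V) v = (σ p : Module.End ℂ V) ((σ q : Module.End ℂ V) v) := by
  rw [hσmul p hp q hq, Units.val_mul, Module.End.mul_apply]

theorem map_one_of_map_mul (hσmul : ∀ p ∈ P, ∀ q ∈ P, σ (p * q) = σ p * σ q) : σ 1 = 1 :=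
  mul_eq_left.mp (by simpa only [one_mul] using (hσmul 1 P.one_mem 1 P.one_mem).symm)

theorem InvIndG.translate_mem (hNnormal : ∀ k ∈ K, ∀ n ∈ N, k * n * k⁻¹ ∈ N)
    {f : G → V} (hf : f ∈ InvIndG P N σ) {k : G} (hk : k ∈ K) :
    (fun x => f (x * k)) ∈ InvIndG P N σ := by
  refine ⟨fun p hp g => by simpa only [mul_assoc] using hf.1 p hp (g * k), fun x n hn => ?_⟩
  calc f (x * n * k) = f (x * k * (k⁻¹ * n * k)) := by group
    _ = f (x * k) := hf.2 _ _ (inv_mul_mul_mem_of_normalizes hNnormal hk hn)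

theorem WSub.apply_mem (hσmul : ∀ p ∈ P, ∀ q ∈ P, σ (p * q) = σ p * σ q)
    (hNnormal : ∀ k ∈ K, ∀ n ∈ N, k * n * k⁻¹ ∈ N) {q : G} (hqK : q ∈ K) (hqP : q ∈ P)
    {v : V} (hv : v ∈ WSub K P N σ) : (σ q : Module.End ℂ V) v ∈ WSub K P N σ := by
  intro q' hq'K hq'P hq'N
  have hcK : q⁻¹ * q' * q ∈ K := mul_mem (mul_mem (K.inv_mem hqK) hq'K) hqK
  have hcP : q⁻¹ * q' * q ∈ P := mul_mem (mul_mem (P.inv_mem hqP) hq'P) hqP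
  have hcN : q⁻¹ * q' * q ∈ N := inv_mul_mul_mem_of_normalizes hNnormal hqK hq'N
  calc (σ q' : Module.End ℂ V) ((σ q : Module.End ℂ V) v)
      = (σ (q' * q) : Module.End ℂ V) v := (map_mul_apply_of_mem hσmul hq'P hqP v).symm
    _ = (σ (q * (q⁻¹ * q' * q)) : Module.End ℂ V) v := by group
    _ = (σ q : Module.End ℂ V) v := by rw [map_mul_apply_of_mem hσmul hqP hcP, hv _ hcK hcP hcN]

theorem WSub.apply_eq_of_inv_mul_mem (hσmul : ∀ p ∈ P, ∀ q ∈ P, σ (p * q) = σ p * σ q)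
    {q q' : G} (hqP : q ∈ P) (hq'P : q' ∈ P) (hK : q⁻¹ * q' ∈ K) (hN : q⁻¹ * q' ∈ N)
    {v : V} (hv : v ∈ WSub K P N σ) :
    (σ q : Module.End ℂ V) v = (σ q' : Module.End ℂ V) v := by
  have hP : q⁻¹ * q' ∈ P := mul_mem (P.inv_mem hqP) hq'P
  calc (σ q : Module.End ℂ V) v
      = (σ q : Module.End ℂ V) ((σ (q⁻¹ * q') : Module.End ℂ V) v) := by rw [hv _ hK hP hN]
    _ = (σ (q * (q⁻¹ * q')) : Module.End ℂ V) v := (map_mul_apply_of_mem hσmul hqP hP v).symm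
    _ = (σ q' : Module.End ℂ V) v := by group

theorem InvIndG.restrict_mem_QIndK (hNnormal : ∀ k ∈ K, ∀ n ∈ N, k * n * k⁻¹ ∈ N)
    {f : G → V} (hf : f ∈ InvIndG P N σ) : (fun x : K => f x) ∈ QIndK K P N σ := by
  refine ⟨fun x q _ hqP hqN => ?_, fun q x hq => hf.1 q hq x, fun x n hn => hf.2 x n hn⟩
  calc (σ q : Module.End ℂ V) (f x) = f (q * x) := (hf.1 q hqP x).symm
    _ = f (x * ((x : G)⁻¹ * q * x)) := by group
    _ = f x := hf.2 _ _ (inv_mul_mul_mem_of_normalizes hNnormal x.2 hqN)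

def InvIndG.restrict (hNnormal : ∀ k ∈ K, ∀ n ∈ N, k * n * k⁻¹ ∈ N) :
    InvIndG P N σ →ₗ[ℂ] QIndK K P N σ where
  toFun f := ⟨fun x => (f : G → V) x, InvIndG.restrict_mem_QIndK hNnormal f.2⟩
  map_add' _ _ := rfl
  map_smul' _ _ := rfl

theorem InvIndG.restrict_injective (hNnormal : ∀ k ∈ K, ∀ n ∈ N, k * n * k⁻¹ ∈ N)
    (hIwasawa : ∀ g : G, ∃ p ∈ P, ∃ k ∈ K, g = p * k) :
    Function.Injective (InvIndG.restrict (P := P) (σ := σ) hNnormal) := by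
  intro f f' h
  ext g
  obtain ⟨p, hp, k, hk, rfl⟩ := hIwasawa g
  rw [f.2.1 p hp k, f'.2.1 p hp k]
  exact congrArg _ (congrFun (congrArg Subtype.val h) ⟨k, hk⟩)

theorem QIndK.map_apply_eq_of_mul_eq (hσmul : ∀ p ∈ P, ∀ q ∈ P, σ (p * q) = σ p * σ q)
    {F : K → V} (hF : F ∈ QIndK K P N σ) {p p' : G} (hp : p ∈ P) (hp' : p' ∈ P) (k k' : K)
    (h : p * k = p' * k') :
    (σ p : Module.End ℂ V) (F k) = (σ p' : Module.End ℂ V) (F k') := by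
  have hq : p'⁻¹ * p = k' * (k : G)⁻¹ := by
    rw [inv_mul_eq_iff_eq_mul, ← mul_assoc, ← h, mul_inv_cancel_right]
  have hqP : p'⁻¹ * p ∈ P := mul_mem (P.inv_mem hp') hp
  have hqK : p'⁻¹ * p ∈ K := hq ▸ mul_mem k'.2 (K.inv_mem k.2)
  have hk' : (⟨p'⁻¹ * p, hqK⟩ * k : K) = k' := Subtype.ext (by simp [hq])
  calc (σ p : Module.End ℂ V) (F k)
      = (σ (p' * (p'⁻¹ * p)) : Module.End ℂ V) (F k) := by rw [mul_inv_cancel_left]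
    _ = (σ p' : Module.End ℂ V) (F k') := by
      rw [map_mul_apply_of_mem hσmul hp' hqP, ← hk', hF.2.1 _ k hqP]

theorem mem_InvIndG_of_forall_apply_mul_eq
    (hσmul : ∀ p ∈ P, ∀ q ∈ P, σ (p * q) = σ p * σ q)
    (hIwasawa : ∀ g : G, ∃ p ∈ P, ∃ k ∈ K, g = p * k) (hNK : N ≤ K)
    {F : K → V} (hF : F ∈ QIndK K P N σ) {f : G → V}
    (hfF : ∀ p ∈ P, ∀ k : K, f (p * k) = (σ p : Module.End ℂ V) (F k)) :
    f ∈ InvIndG P N σ := by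
  constructor
  · intro p₀ hp₀ g
    obtain ⟨p, hp, k, hk, rfl⟩ := hIwasawa g
    rw [← mul_assoc, hfF _ (mul_mem hp₀ hp) ⟨k, hk⟩, hfF p hp ⟨k, hk⟩,
      map_mul_apply_of_mem hσmul hp₀ hp]
  · intro x n hn
    obtain ⟨p, hp, k, hk, rfl⟩ := hIwasawa x
    have hkn : f (p * (k * n)) = (σ p : Module.End ℂ V) (F (⟨k, hk⟩ * ⟨n, hNK hn⟩)) :=
      hfF p hp (⟨k, hk⟩ * ⟨n, hNK hn⟩)
    rw [mul_assoc, hkn, hfF p hp ⟨k, hk⟩, hF.2.2 ⟨k, hk⟩ ⟨n, hNK hn⟩ hn]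

theorem InvIndG.restrict_surjective (hσmul : ∀ p ∈ P, ∀ q ∈ P, σ (p * q) = σ p * σ q)
    (hIwasawa : ∀ g : G, ∃ p ∈ P, ∃ k ∈ K, g = p * k) (hNK : N ≤ K)
    (hNnormal : ∀ k ∈ K, ∀ n ∈ N, k * n * k⁻¹ ∈ N) :
    Function.Surjective (InvIndG.restrict (P := P) (σ := σ) hNnormal) := by
  rintro ⟨F, hF⟩
  choose p hp k hk hpk using hIwasawa
  let f : G → V := fun g => (σ (p g) : Module.End ℂ V) (F ⟨k g, hk g⟩)
  have hfF : ∀ q ∈ P, ∀ k' : K, f (q * k') = (σ q : Module.End ℂ V) (F k') := fun q hq k' =>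
    QIndK.map_apply_eq_of_mul_eq hσmul hF (hp _) hq _ _ (hpk _).symm
  refine ⟨⟨f, mem_InvIndG_of_forall_apply_mul_eq hσmul (fun g => ⟨_, hp g, _, hk g, hpk g⟩) hNK
    hF hfF⟩, Subtype.ext (funext fun x => ?_)⟩
  change f x = F x
  simpa [map_one_of_map_mul hσmul] using hfF 1 P.one_mem x

end

theorem statement2_general {G : Type*} [Group G] {V : Type*} [AddCommGroup V] [Module ℂ V]
    (P K N : Subgroup G)
    (hIwasawa : ∀ g : G, ∃ p ∈ P, ∃ k ∈ K, g = p * k)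
    (hNK : N ≤ K)
    (hNnormal : ∀ k ∈ K, ∀ n ∈ N, k * n * k⁻¹ ∈ N)
    (σ : G → (Module.End ℂ V)ˣ)
    (hσmul : ∀ p ∈ P, ∀ q ∈ P, σ (p * q) = σ p * σ q) :
    -- stability under the right-translation action of `K`, and `N` acts trivially
    (∀ f ∈ InvIndG P N σ, ∀ k ∈ K, (fun x => f (x * k)) ∈ InvIndG P N σ) ∧
    (∀ f ∈ InvIndG P N σ, ∀ n ∈ N, (fun x => f (x * n)) = f) ∧
    -- `qN ↦ σ(q)|_W` is a well-defined action of `QN/N` on `W`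
    (∀ q : G, q ∈ K → q ∈ P → ∀ v ∈ WSub K P N σ, (σ q : Module.End ℂ V) v ∈ WSub K P N σ) ∧
    (∀ q q' : G, q ∈ K → q ∈ P → q' ∈ K → q' ∈ P → q⁻¹ * q' ∈ N →
      ∀ v ∈ WSub K P N σ, (σ q : Module.End ℂ V) v = (σ q' : Module.End ℂ V) v) ∧
    -- the `K/N`-equivariant isomorphism given by restriction to `K`
    (∃ e : InvIndG P N σ ≃ₗ[ℂ] QIndK K P N σ,
      (∀ (f : InvIndG P N σ) (x : ↥K), (e f : ↥K → V) x = (f : G → V) x) ∧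
      (∀ (f f' : InvIndG P N σ) (k : ↥K),
        ((f' : G → V) = fun g => (f : G → V) (g * (k : G))) →
        ∀ x : ↥K, (e f' : ↥K → V) x = (e f : ↥K → V) (x * k))) := by
  refine ⟨fun f hf k hk => InvIndG.translate_mem hNnormal hf hk,
    fun f hf n hn => funext fun x => hf.2 x n hn,
    fun q hqK hqP v hv => WSub.apply_mem hσmul hNnormal hqK hqP hv,
    fun q q' hqK hqP hq'K hq'P hN v hv =>
      WSub.apply_eq_of_inv_mul_mem hσmul hqP hq'P (mul_mem (K.inv_mem hqK) hq'K) hN hv,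
    LinearEquiv.ofBijective (InvIndG.restrict hNnormal)
      ⟨InvIndG.restrict_injective hNnormal hIwasawa,
        InvIndG.restrict_surjective hσmul hIwasawa hNK hNnormal⟩,
    fun f x => rfl, ?_⟩
  intro f f' k h x
  change (f' : G → V) x = (f : G → V) (x * k : K)
  rw [h]
  rfl

/-- with `U ⊴ P`, `P = LU`, `L ∩ U = 1`, `G = PK`,
`K ∩ P = (K∩L)(K∩U)`, `N ⊴ K`, and `σ` a representation of `L` inflated to `P`,
the `N`-invariants of `Ind_P^G V` are `K`-stable with trivial `N`-action, the action
`qN ↦ σ(q)|_W` of `QN/N` on `W` is well defined, and as a representation of `K/N` the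
space of `N`-invariants is isomorphic to `Ind_{QN/N}^{K/N} W`. -/
theorem statement2 {G : Type*} [Group G] {V : Type*} [AddCommGroup V] [Module ℂ V]
    (P L U K N : Subgroup G)
    (hUP : U ≤ P) (hLP : L ≤ P)
    (hUnormal : ∀ p ∈ P, ∀ u ∈ U, p * u * p⁻¹ ∈ U)
    (hPLU : ∀ p ∈ P, ∃ l ∈ L, ∃ u ∈ U, p = l * u)
    (hLU : ∀ x : G, x ∈ L → x ∈ U → x = 1)
    (hIwasawa : ∀ g : G, ∃ p ∈ P, ∃ k ∈ K, g = p * k)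
    (hKP : ∀ q : G, q ∈ K → q ∈ P →
      ∃ l, l ∈ K ∧ l ∈ L ∧ ∃ u, u ∈ K ∧ u ∈ U ∧ q = l * u)
    (hNK : N ≤ K)
    (hNnormal : ∀ k ∈ K, ∀ n ∈ N, k * n * k⁻¹ ∈ N)
    (σ : G → (Module.End ℂ V)ˣ)
    (hσone : σ 1 = 1)
    (hσmul : ∀ p ∈ P, ∀ q ∈ P, σ (p * q) = σ p * σ q)
    (hσinfl : ∀ l ∈ L, ∀ u ∈ U, σ (l * u) = σ l) :
    -- stability under the right-translation action of `K`, and `N` acts trivially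
    (∀ f ∈ InvIndG P N σ, ∀ k ∈ K, (fun x => f (x * k)) ∈ InvIndG P N σ) ∧
    (∀ f ∈ InvIndG P N σ, ∀ n ∈ N, (fun x => f (x * n)) = f) ∧
    -- `qN ↦ σ(q)|_W` is a well-defined action of `QN/N` on `W`
    (∀ q : G, q ∈ K → q ∈ P → ∀ v ∈ WSub K P N σ, (σ q : Module.End ℂ V) v ∈ WSub K P N σ) ∧
    (∀ q q' : G, q ∈ K → q ∈ P → q' ∈ K → q' ∈ P → q⁻¹ * q' ∈ N →
      ∀ v ∈ WSub K P N σ, (σ q : Module.End ℂ V) v = (σ q' : Module.End ℂ V) v) ∧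
    -- the `K/N`-equivariant isomorphism given by restriction to `K`
    (∃ e : InvIndG P N σ ≃ₗ[ℂ] QIndK K P N σ,
      (∀ (f : InvIndG P N σ) (x : ↥K), (e f : ↥K → V) x = (f : G → V) x) ∧
      (∀ (f f' : InvIndG P N σ) (k : ↥K),
        ((f' : G → V) = fun g => (f : G → V) (g * (k : G))) →
        ∀ x : ↥K, (e f' : ↥K → V) x = (e f : ↥K → V) (x * k))) :=
  statement2_general P K N hIwasawa hNK hNnormal σ hσmul
end
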